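/- arXiv:2008.06220 — 3 statements merged into one kernel-verified Lean document; each statement's English description precedes it below -/
import Mathlib

section
/- Let A be a Hermitian matrix partitioned into a 3×3 block form with blocks A_{ij}, 1 ≤ i,j ≤ 3, such that A_{22} and the 2×2 block matrix [[A_{11}, A_{12}],[A_{21}, A_{22}]] are invertible and A is positive semidefinite. Then the Schur complement with respect to the larger block is dominated by the Schur complement with respect to the smaller block: A_{33} - (A_{31}, A_{32}) [[A_{11}, A_{12}],[A_{21}, A_{22}]]^{-1} (A_{13}; A_{23}) ≼ A_{33} - A_{32} A_{22}^{-1} A_{23} in the Loewner order. -/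
/-!
Write `B` for the leading `(a ⊕ b)`-block and `C = (A₁₃; A₂₃)`. Since `B` is positive definite,
the matrix `[B C; Cᴴ Cᴴ B⁻¹ C]` is positive semidefinite, its Schur complement being zero. Its
principal submatrix on `b ⊕ c` is `[A₂₂ A₂₃; A₂₃ᴴ Cᴴ B⁻¹ C]`, and positive semidefiniteness of
that matrix says exactly that its Schur complement `Cᴴ B⁻¹ C - A₂₃ᴴ A₂₂⁻¹ A₂₃` is positive
semidefinite, which is the claim after cancelling `A₃₃`.
-/

open Matrix
open scoped ComplexOrder

namespace Matrix

variable {𝕜 : Type*} [RCLike 𝕜] {m n p : Type*} [Fintype m] [Fintype n] [Finite p]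

theorem PosDef.posSemidef_fromBlocks_conjTranspose_mul_inv_mul [DecidableEq n]
    {B : Matrix n n 𝕜} (hB : B.PosDef) (C : Matrix n p 𝕜) :
    (fromBlocks B C Cᴴ (Cᴴ * B⁻¹ * C)).PosSemidef := by
  have := hB.isUnit.invertible
  rw [hB.fromBlocks₁₁, sub_self]
  exact .zero

theorem PosDef.posSemidef_conjTranspose_mul_inv_mul_fromBlocks_sub [DecidableEq m]
    [DecidableEq n] {B₁₁ : Matrix m m 𝕜} {B₁₂ : Matrix m n 𝕜} {B₂₁ : Matrix n m 𝕜}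
    {B₂₂ : Matrix n n 𝕜} (hB : (fromBlocks B₁₁ B₁₂ B₂₁ B₂₂).PosDef)
    (C₁ : Matrix m p 𝕜) (C₂ : Matrix n p 𝕜) :
    ((fromRows C₁ C₂)ᴴ * (fromBlocks B₁₁ B₁₂ B₂₁ B₂₂)⁻¹ * fromRows C₁ C₂ -
      C₂ᴴ * B₂₂⁻¹ * C₂).PosSemidef := by
  have hB₂₂ : B₂₂.PosDef := hB.submatrix (e := (Sum.inr : n → m ⊕ n)) Sum.inr_injective
  have := hB₂₂.isUnit.invertible
  set C := fromRows C₁ C₂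
  set X := Cᴴ * (fromBlocks B₁₁ B₁₂ B₂₁ B₂₂)⁻¹ * C
  have hsub : (fromBlocks (fromBlocks B₁₁ B₁₂ B₂₁ B₂₂) C Cᴴ X).submatrix
      (Sum.map Sum.inr id) (Sum.map Sum.inr id) = fromBlocks B₂₂ C₂ C₂ᴴ X := by
    ext (i | i) (j | j) <;> simp [C]
  rw [← hB₂₂.fromBlocks₁₁, ← hsub]
  exact (hB.posSemidef_fromBlocks_conjTranspose_mul_inv_mul C).submatrix _

end Matrix

theorem stmt0_general {a b c : Type*} [Fintype a] [Fintype b] [Fintype c]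
    [DecidableEq a] [DecidableEq b]
    (A11 : Matrix a a ℂ) (A12 : Matrix a b ℂ) (A13 : Matrix a c ℂ)
    (A21 : Matrix b a ℂ) (A22 : Matrix b b ℂ) (A23 : Matrix b c ℂ)
    (A31 : Matrix c a ℂ) (A32 : Matrix c b ℂ) (A33 : Matrix c c ℂ)
    (hA : (Matrix.fromBlocks (Matrix.fromBlocks A11 A12 A21 A22)
        (Matrix.fromRows A13 A23) (Matrix.fromCols A31 A32) A33).PosSemidef)
    (hTop : IsUnit (Matrix.fromBlocks A11 A12 A21 A22)) :
    ((A33 - A32 * A22⁻¹ * A23) -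
      (A33 - Matrix.fromCols A31 A32 * (Matrix.fromBlocks A11 A12 A21 A22)⁻¹ *
        Matrix.fromRows A13 A23)).PosSemidef := by
  obtain ⟨-, hC, -, -⟩ := isHermitian_fromBlocks_iff.mp hA.isHermitian
  rw [conjTranspose_fromRows_eq_fromCols_conjTranspose] at hC
  obtain ⟨-, hA32⟩ := fromCols_inj hC
  have hB : (fromBlocks A11 A12 A21 A22).PosDef :=
    (PosSemidef.posDef_iff_isUnit (hA.submatrix (Sum.inl : a ⊕ b → (a ⊕ b) ⊕ c))).mpr hTop
  rw [← hC, ← conjTranspose_fromRows_eq_fromCols_conjTranspose, ← hA32,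
    sub_sub_sub_cancel_left]
  exact hB.posSemidef_conjTranspose_mul_inv_mul_fromBlocks_sub A13 A23

theorem stmt0 {a b c : Type*} [Fintype a] [Fintype b] [Fintype c]
    [DecidableEq a] [DecidableEq b] [DecidableEq c]
    (A11 : Matrix a a ℂ) (A12 : Matrix a b ℂ) (A13 : Matrix a c ℂ)
    (A21 : Matrix b a ℂ) (A22 : Matrix b b ℂ) (A23 : Matrix b c ℂ)
    (A31 : Matrix c a ℂ) (A32 : Matrix c b ℂ) (A33 : Matrix c c ℂ)
    (hA : (Matrix.fromBlocks (Matrix.fromBlocks A11 A12 A21 A22)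
        (Matrix.fromRows A13 A23) (Matrix.fromCols A31 A32) A33).PosSemidef)
    (h22 : IsUnit A22)
    (hTop : IsUnit (Matrix.fromBlocks A11 A12 A21 A22)) :
    ((A33 - A32 * A22⁻¹ * A23) -
      (A33 - Matrix.fromCols A31 A32 * (Matrix.fromBlocks A11 A12 A21 A22)⁻¹ *
        Matrix.fromRows A13 A23)).PosSemidef :=
  stmt0_general A11 A12 A13 A21 A22 A23 A31 A32 A33 hA hTop
end

section
/- Let λ ≥ 1 and let σ²_t, t = 0,…,T−1, be nonnegative reals each bounded above by B for a kernel K with K(x,x) ≤ B for all x, and satisfying ∏_{t=0}^{T-1}(1 + σ²_t/λ) = det(K_T/λ + I). Then Σ_{t=0}^{T-1} σ²_t ≤ max(1, B) · (1 + B/λ)/log(1 + B/λ) · log det(K_T/λ + I). In particular if σ²_t ≤ λ for all t, then Σ_t σ²_t ≤ 2λ log det(K_T/λ + I). -/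
/-!
Since `log (1 + x)` is concave and vanishes at `0`, the chord bound gives
`s ≤ c / log (1 + c) * log (1 + s)` for `0 ≤ s ≤ c`. Apply it to `s = σ²_t / λ` and
`c = B / λ` and sum: the logarithms add up to the log of the product, i.e. to
`log det (K_T / λ + 1)`.
For the second bound take `c = 1` and use `log 2 > 1 / 2`.
-/

open Real Finset

lemma mul_log_one_add_le_mul_log_one_add {s c : ℝ} (hs : 0 ≤ s) (hsc : s ≤ c) :
    s * log (1 + c) ≤ c * log (1 + s) := by
  rcases (hs.trans hsc).eq_or_lt with rfl | hc
  · obtain rfl : s = 0 := le_antisymm hsc hs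
    simp
  have hchord := strictConcaveOn_log_Ioi.concaveOn.2 (x := 1) (y := 1 + c)
    (by norm_num) (by simp only [Set.mem_Ioi]; linarith)
    (sub_nonneg.2 ((div_le_one hc).2 hsc)) (div_nonneg hs hc.le) (sub_add_cancel 1 (s / c))
  have hpoint : (1 - s / c) * 1 + s / c * (1 + c) = 1 + s := by field_simp; ring
  simp only [smul_eq_mul, log_one, mul_zero, zero_add, hpoint] at hchord
  calc s * log (1 + c) = c * (s / c * log (1 + c)) := by field_simp
    _ ≤ c * log (1 + s) := mul_le_mul_of_nonneg_left hchord hc.le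

lemma le_div_log_one_add_mul_log_one_add {s c : ℝ} (hs : 0 ≤ s) (hsc : s ≤ c) :
    s ≤ c / log (1 + c) * log (1 + s) := by
  rcases (hs.trans hsc).eq_or_lt with rfl | hc
  · obtain rfl : s = 0 := le_antisymm hsc hs
    simp
  rw [div_mul_eq_mul_div, le_div_iff₀ (log_pos (by linarith))]
  exact mul_log_one_add_le_mul_log_one_add hs hsc

lemma sum_le_div_log_one_add_mul_log_prod {ι : Type*} [Fintype ι] {x : ι → ℝ} {c : ℝ}
    (hx : ∀ i, 0 ≤ x i) (hxc : ∀ i, x i ≤ c) :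
    ∑ i, x i ≤ c / log (1 + c) * log (∏ i, (1 + x i)) := by
  rw [log_prod fun i _ => by linarith [hx i], mul_sum]
  exact sum_le_sum fun i _ => le_div_log_one_add_mul_log_one_add (hx i) (hxc i)

lemma log_prod_one_add_nonneg {ι : Type*} [Fintype ι] {x : ι → ℝ} (hx : ∀ i, 0 ≤ x i) :
    0 ≤ log (∏ i, (1 + x i)) :=
  log_nonneg (Finset.one_le_prod fun i _ => by linarith [hx i])

theorem stmt5_general {T : ℕ} (lam B : ℝ) (hlam : 1 ≤ lam) (hB : 0 < B)
    (σ2 : Fin T → ℝ) (hnn : ∀ t, 0 ≤ σ2 t) (hub : ∀ t, σ2 t ≤ B)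
    (KT : Matrix (Fin T) (Fin T) ℝ)
    (hprod : ∏ t, (1 + σ2 t / lam) = ((lam⁻¹ • KT) + 1).det) :
    (∑ t, σ2 t ≤ max 1 B * ((1 + B / lam) / Real.log (1 + B / lam)) *
        Real.log (((lam⁻¹ • KT) + 1).det)) ∧
    ((∀ t, σ2 t ≤ lam) →
      ∑ t, σ2 t ≤ 2 * lam * Real.log (((lam⁻¹ • KT) + 1).det)) := by
  have hlam0 : 0 < lam := by linarith
  have hx : ∀ t, 0 ≤ σ2 t / lam := fun t => div_nonneg (hnn t) hlam0.le
  have hsum : ∑ t, σ2 t = lam * ∑ t, σ2 t / lam := by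
    rw [mul_sum]; congr 1 with t; field_simp
  rw [← hprod, hsum]
  set L := log (∏ t, (1 + σ2 t / lam))
  have hL : 0 ≤ L := log_prod_one_add_nonneg hx
  constructor
  · have hc : 0 ≤ B / lam := div_nonneg hB.le hlam0.le
    have hBmax : B ≤ max 1 B * (1 + B / lam) :=
      (le_max_right 1 B).trans (le_mul_of_one_le_right (by positivity) (by linarith))
    calc lam * ∑ t, σ2 t / lam ≤ lam * (B / lam / log (1 + B / lam) * L) :=
          mul_le_mul_of_nonneg_left (sum_le_div_log_one_add_mul_log_prod hx
            fun t => div_le_div_of_nonneg_right (hub t) hlam0.le) hlam0.le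
      _ = B * (L / log (1 + B / lam)) := by field_simp
      _ ≤ max 1 B * (1 + B / lam) * (L / log (1 + B / lam)) :=
          mul_le_mul_of_nonneg_right hBmax (div_nonneg hL (log_nonneg (by linarith)))
      _ = _ := by ring
  · intro hle
    have hinv : 1 / log 2 ≤ 2 := by
      rw [div_le_iff₀ (by positivity)]; linarith [log_two_gt_d9]
    calc lam * ∑ t, σ2 t / lam ≤ lam * (1 / log (1 + 1) * L) :=
          mul_le_mul_of_nonneg_left (sum_le_div_log_one_add_mul_log_prod hx
            fun t => (div_le_one hlam0).2 (hle t)) hlam0.le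
      _ ≤ lam * (2 * L) := by
          rw [one_add_one_eq_two]
          gcongr
      _ = _ := by ring

theorem stmt5 {T : ℕ} (lam B : ℝ) (hlam : 1 ≤ lam) (hB : 0 < B)
    (σ2 : Fin T → ℝ) (hnn : ∀ t, 0 ≤ σ2 t) (hub : ∀ t, σ2 t ≤ B)
    (KT : Matrix (Fin T) (Fin T) ℝ) (hKT : KT.PosSemidef)
    (hprod : ∏ t, (1 + σ2 t / lam) = ((lam⁻¹ • KT) + 1).det) :
    (∑ t, σ2 t ≤ max 1 B * ((1 + B / lam) / Real.log (1 + B / lam)) *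
        Real.log (((lam⁻¹ • KT) + 1).det)) ∧
    ((∀ t, σ2 t ≤ lam) →
      ∑ t, σ2 t ≤ 2 * lam * Real.log (((lam⁻¹ • KT) + 1).det)) :=
  stmt5_general lam B hlam hB σ2 hnn hub KT hprod
end

section
/- Monotonicity of posterior variance under added data: with a PSD kernel K and λ > 0, for any two datasets D ⊆ D' (as multisets of points) and any point x, the ridge-regression variance σ²_{D'}(x) = K(x,x) − κ_{D'}(x)ᵀ(K_{D'} + λI)^{-1}κ_{D'}(x) is at most σ²_D(x). -/
/-!
For a positive definite `A`, `κᵀ A⁻¹ κ = max_v (2 vᵀκ - vᵀ A v)`, the maximum being attained at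
`v = A⁻¹ κ`. The regularised Gram matrix of the first `s` points is a principal submatrix of that
of all `n` points, and extending a vector on the sub-dataset by zero turns its objective into the
objective of the full dataset. So the maximum for the sub-dataset is a value of the full problem,
hence at most its maximum: the subtracted term only grows with the data.
-/

open Matrix

namespace Matrix

variable {m n R : Type*} [Fintype m] [Fintype n]

section Semiring

variable [CommSemiring R]

theorem extend_zero_dotProduct {e : m → n} (he : Function.Injective e) (v : m → R) (u : n → R) :
    Function.extend e v 0 ⬝ᵥ u = v ⬝ᵥ (u ∘ e) :=
  (Fintype.sum_of_injective e he _ _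
    (fun j hj => by rw [Function.extend_apply' _ _ _ hj, Pi.zero_apply, zero_mul])
    (fun i => by rw [he.extend_apply, Function.comp_apply])).symm

theorem submatrix_mulVec_eq_mulVec_extend_zero {e : m → n} (he : Function.Injective e)
    (A : Matrix n n R) (v : m → R) :
    A.submatrix e e *ᵥ v = (A *ᵥ Function.extend e v 0) ∘ e := by
  ext i
  rw [Function.comp_apply, mulVec, mulVec, dotProduct_comm _ (Function.extend e v 0),
    extend_zero_dotProduct he, dotProduct_comm]
  rfl

theorem IsSymm.dotProduct_mulVec_comm {A : Matrix n n R} (hA : A.IsSymm) (v w : n → R) :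
    v ⬝ᵥ (A *ᵥ w) = w ⬝ᵥ (A *ᵥ v) := by
  rw [dotProduct_mulVec, ← mulVec_transpose, hA.eq, dotProduct_comm]

end Semiring

variable [Field R] [LinearOrder R] [IsStrictOrderedRing R] [StarRing R] [TrivialStar R]
  [DecidableEq n]

theorem PosDef.isGreatest_dotProduct_inv_mulVec {A : Matrix n n R} (hA : A.PosDef) (κ : n → R) :
    IsGreatest (Set.range fun v => 2 * (v ⬝ᵥ κ) - v ⬝ᵥ (A *ᵥ v)) (κ ⬝ᵥ (A⁻¹ *ᵥ κ)) := by
  set w := A⁻¹ *ᵥ κ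
  have hAw : A *ᵥ w = κ := by
    rw [mulVec_mulVec, mul_nonsing_inv _ ((isUnit_iff_isUnit_det A).mp hA.isUnit), one_mulVec]
  refine ⟨⟨w, by simp only [hAw, dotProduct_comm w κ]; ring⟩, ?_⟩
  rintro _ ⟨v, rfl⟩
  have hsymm : w ⬝ᵥ (A *ᵥ v) = v ⬝ᵥ κ := by
    rw [(isHermitian_iff_isSymm.mp hA.isHermitian).dotProduct_mulVec_comm, hAw]
  -- expanding `(v - w)ᵀ A (v - w) ≥ 0`
  have hnonneg := hA.posSemidef.dotProduct_mulVec_nonneg (v - w)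
  rw [star_trivial, mulVec_sub, hAw, sub_dotProduct, dotProduct_sub, dotProduct_sub, hsymm,
    dotProduct_comm w κ] at hnonneg
  linarith

theorem PosDef.dotProduct_inv_mulVec_submatrix_le {A : Matrix n n R} (hA : A.PosDef)
    [DecidableEq m] {e : m → n} (he : Function.Injective e) (κ : n → R) :
    (κ ∘ e) ⬝ᵥ ((A.submatrix e e)⁻¹ *ᵥ (κ ∘ e)) ≤ κ ⬝ᵥ (A⁻¹ *ᵥ κ) := by
  obtain ⟨⟨v, hv⟩, -⟩ := (hA.submatrix he).isGreatest_dotProduct_inv_mulVec (κ ∘ e)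
  rw [← hv]
  dsimp only
  rw [submatrix_mulVec_eq_mulVec_extend_zero he, ← extend_zero_dotProduct he,
    ← extend_zero_dotProduct he]
  exact (hA.isGreatest_dotProduct_inv_mulVec κ).2 ⟨_, rfl⟩

end Matrix

theorem stmt18 {X : Type*} (K : X → X → ℝ)
    (hK : ∀ (n : ℕ) (z : Fin n → X),
      (Matrix.of fun i j => K (z i) (z j) : Matrix (Fin n) (Fin n) ℝ).PosSemidef)
    (lam : ℝ) (hlam : 0 < lam) (s n : ℕ) (hsn : s ≤ n) (x : Fin n → X) (x0 : X) :
    K x0 x0 - (fun i : Fin n => K x0 (x i)) ⬝ᵥ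
        ((((Matrix.of fun i j : Fin n => K (x i) (x j)) + lam • 1)⁻¹) *ᵥ
          fun i : Fin n => K x0 (x i))
      ≤ K x0 x0 - (fun i : Fin s => K x0 (x (Fin.castLE hsn i))) ⬝ᵥ
        ((((Matrix.of fun i j : Fin s =>
              K (x (Fin.castLE hsn i)) (x (Fin.castLE hsn j))) + lam • 1)⁻¹) *ᵥ
          fun i : Fin s => K x0 (x (Fin.castLE hsn i))) := by
  have hA : ((Matrix.of fun i j : Fin n => K (x i) (x j)) + lam • 1).PosDef :=
    PosDef.posSemidef_add (hK n x) (PosDef.one.smul hlam)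
  have hsub : (Matrix.of fun i j : Fin s => K (x (Fin.castLE hsn i)) (x (Fin.castLE hsn j)))
      + lam • 1 = ((Matrix.of fun i j : Fin n => K (x i) (x j)) + lam • 1).submatrix
        (Fin.castLE hsn) (Fin.castLE hsn) := by
    rw [← submatrix_one _ (Fin.castLE_injective hsn)]
    rfl
  rw [hsub]
  exact sub_le_sub_left
    (hA.dotProduct_inv_mulVec_submatrix_le (Fin.castLE_injective hsn) fun i => K x0 (x i)) _
end
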